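/- For s > 1, the map ξ ↦ Λ_ph(ξ), where Λ_ph(ξ) is the smaller eigenvalue of M(ξ)⁻¹ R^s(ξ), is monotonically nondecreasing on [0, π]. -/

import Mathlib

open Real Complex Matrix Filter Topology

/-- Fourier symbol of the SIPG mass matrix (mesh size h = 1). -/
noncomputable def Msym (ξ : ℝ) : Matrix (Fin 2) (Fin 2) ℂ :=
  !![(((2 + Real.cos ξ) / 3 : ℝ) : ℂ), Complex.I * (Real.sin ξ : ℂ) / 6;
     -Complex.I * (Real.sin ξ : ℂ) / 6, (((2 - Real.cos ξ) / 12 : ℝ) : ℂ)]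

/-- Fourier symbol of the SIPG stiffness matrix with penalty parameter s (mesh size h = 1). -/
noncomputable def Rsym (s ξ : ℝ) : Matrix (Fin 2) (Fin 2) ℂ :=
  !![((4 * Real.sin (ξ / 2) ^ 2 : ℝ) : ℂ), 0;
     0, ((s - Real.cos (ξ / 2) ^ 2 : ℝ) : ℂ)]

/-- The matrix S(ξ) = M(ξ)⁻¹ R^s(ξ). -/
noncomputable def Ssym (s ξ : ℝ) : Matrix (Fin 2) (Fin 2) ℂ := (Msym ξ)⁻¹ * Rsym s ξ

/-- Λ is an eigenvalue of the 2×2 complex matrix S. -/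
def IsEigOf (S : Matrix (Fin 2) (Fin 2) ℂ) (Λ : ℂ) : Prop :=
  ∃ v : Fin 2 → ℂ, v ≠ 0 ∧ S.mulVec v = Λ • v

/-- The coefficient B(ξ) of the characteristic quadratic Λ²/12 − B Λ + C = 0. -/
noncomputable def Bcoef (s ξ : ℝ) : ℝ :=
  4 * Real.sin (ξ / 2) ^ 2 * (2 - Real.cos ξ) / 12 +
    (s - Real.cos (ξ / 2) ^ 2) * (2 + Real.cos ξ) / 3

/-- The coefficient C(ξ) of the characteristic quadratic Λ²/12 − B Λ + C = 0. -/
noncomputable def Ccoef (s ξ : ℝ) : ℝ :=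
  4 * Real.sin (ξ / 2) ^ 2 * (s - Real.cos (ξ / 2) ^ 2)

/-!
In the variable `t = cos ξ`, which decreases on `[0, π]`, the eigenvalues of `M⁻¹ R^s` are the
roots of `q_t(x) = x²/12 - (2s - 3t + st) x / 3 + (1 - t)(2s - 1 - t)`. For `u ≤ t` the smaller
root `x` of `q_t` lies left of the vertex of `q_u` and satisfies
`q_u(x) = (t - u)((s - 3) x + 3 (2s - t - u)) / 3 ≥ 0`; as `q_u` decreases left of its vertex,
`x` lies below every root of `q_u`. The two estimates on `x` come from `x ≤ 12` when `s ≥ 3`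
(since `q_t(12) = (1 + t)(t + 11 - 6s) ≤ 0`) and from Vieta's bound
`x (2s - 3t + st) ≤ 6 (1 - t)(2s - 1 - t)` when `s ≤ 3`.
-/

lemma le_of_quadratic_le {a b x y : ℝ} (ha : 0 < a) (hx : 2 * a * x + b ≤ 0)
    (h : a * y ^ 2 + b * y ≤ a * x ^ 2 + b * x) : x ≤ y := by
  by_contra! hyx
  have hneg : a * (x + y) + b < 0 := by nlinarith
  nlinarith [mul_pos (sub_pos.2 hyx) (neg_pos.2 hneg)]

noncomputable def charB (s t : ℝ) : ℝ := 2 * s - 3 * t + s * t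

/-- `t` stands for `cos ξ`, see `det_Rsym_sub_smul_Msym`. -/
noncomputable def charQuad (s t x : ℝ) : ℝ :=
  x ^ 2 / 12 - charB s t / 3 * x + (1 - t) * (2 * s - 1 - t)

def IsLowerRoot (s t x : ℝ) : Prop := charQuad s t x = 0 ∧ x ≤ 2 * charB s t

section charQuad

variable {s t u x y : ℝ}

lemma charB_pos (hs : 1 < s) (ht₀ : -1 ≤ t) (ht₁ : t ≤ 1) : 0 < charB s t := by
  unfold charB
  nlinarith [mul_nonneg (sub_nonneg.2 hs.le) (neg_le_iff_add_nonneg'.1 ht₀)]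

lemma charQuad_reflect : charQuad s t (4 * charB s t - x) = charQuad s t x := by
  unfold charQuad; ring

lemma charQuad_sub_charQuad :
    charQuad s u x - charQuad s t x = (t - u) * ((s - 3) * x + 3 * (2 * s - t - u)) / 3 := by
  unfold charQuad charB; ring

lemma charQuad_twelve : charQuad s t 12 = (1 + t) * (t + 11 - 6 * s) := by
  unfold charQuad charB; ring

lemma le_of_charQuad_le (hx : x ≤ 2 * charB s t) (h : charQuad s t y ≤ charQuad s t x) :
    x ≤ y :=
  le_of_quadratic_le (a := 1 / 12) (b := -charB s t / 3) (by norm_num) (by linarith)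
    (by unfold charQuad at h; linarith)

lemma charQuad_vieta (h : charQuad s t x = 0) :
    x * (4 * charB s t - x) = 12 * ((1 - t) * (2 * s - 1 - t)) := by
  unfold charQuad at h
  linear_combination (-12) * h

namespace IsLowerRoot

lemma nonneg (hr : IsLowerRoot s t x) (hs : 1 < s) (ht₀ : -1 ≤ t) (ht₁ : t ≤ 1) : 0 ≤ x := by
  have hC : 0 ≤ (1 - t) * (2 * s - 1 - t) := mul_nonneg (by linarith) (by linarith)
  nlinarith [charQuad_vieta hr.1, charB_pos hs ht₀ ht₁, hr.2]

lemma mul_charB_le (hr : IsLowerRoot s t x) (hs : 1 < s) (ht₀ : -1 ≤ t) (ht₁ : t ≤ 1) :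
    x * charB s t ≤ 6 * ((1 - t) * (2 * s - 1 - t)) := by
  nlinarith [charQuad_vieta hr.1, hr.nonneg hs ht₀ ht₁, hr.2]

lemma le_twelve (hr : IsLowerRoot s t x) (hs : 2 ≤ s) (ht₀ : -1 ≤ t) (ht₁ : t ≤ 1) :
    x ≤ 12 :=
  le_of_charQuad_le hr.2 <| by
    rw [charQuad_twelve, hr.1]
    exact mul_nonpos_of_nonneg_of_nonpos (by linarith) (by linarith)

lemma le_two_mul_charB_of_le (hr : IsLowerRoot s t x) (hu : -1 ≤ u)
    (hut : u ≤ t) (ht : t ≤ 1) : x ≤ 2 * charB s u := by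
  have hgap : charB s u - charB s t = (3 - s) * (t - u) := by unfold charB; ring
  rcases le_total s 3 with hs3 | hs3
  · nlinarith [hr.2, mul_nonneg (sub_nonneg.2 hs3) (sub_nonneg.2 hut)]
  · have hB : charB s u = (s - 3) * (1 + u) + s + 3 := by unfold charB; ring
    nlinarith [hr.le_twelve (by linarith) (by linarith) ht,
      mul_nonneg (sub_nonneg.2 hs3) (neg_le_iff_add_nonneg'.1 hu)]

lemma charQuad_nonneg_of_le (hr : IsLowerRoot s t x) (hs : 1 < s) (hu : -1 ≤ u)
    (hut : u ≤ t) (ht : t ≤ 1) : 0 ≤ charQuad s u x := by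
  have hx := hr.nonneg hs (hu.trans hut) ht
  have hdiff := charQuad_sub_charQuad (s := s) (t := t) (u := u) (x := x)
  rw [hr.1, sub_zero] at hdiff
  rw [hdiff]
  refine div_nonneg (mul_nonneg (sub_nonneg.2 hut) ?_) zero_le_three
  rcases le_total 3 s with hs3 | hs3
  · nlinarith [mul_nonneg (sub_nonneg.2 hs3) hx]
  · have hB := charB_pos hs (hu.trans hut) ht
    have hkey : (3 - s) * ((1 - t) * (2 * s - 1 - t)) ≤ (s - t) * charB s t := by
      have hfactor : (s - t) * charB s t - (3 - s) * ((1 - t) * (2 * s - 1 - t))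
          = (s - 1) * (4 * s - 3 - s * t) := by unfold charB; ring
      nlinarith [mul_nonneg (sub_nonneg.2 hs.le) (by nlinarith : (0:ℝ) ≤ 4 * s - 3 - s * t)]
    have hxB : (3 - s) * x * charB s t ≤ 6 * (s - t) * charB s t := by
      nlinarith [mul_le_mul_of_nonneg_left (hr.mul_charB_le hs (hu.trans hut) ht)
        (sub_nonneg.2 hs3)]
    nlinarith [le_of_mul_le_mul_right hxB hB]

lemma le_of_le (hr : IsLowerRoot s t x) (hs : 1 < s) (hu : -1 ≤ u) (hut : u ≤ t) (ht : t ≤ 1)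
    (hy : charQuad s u y = 0) : x ≤ y :=
  le_of_charQuad_le (hr.le_two_mul_charB_of_le hu hut ht)
    (hy ▸ hr.charQuad_nonneg_of_le hs hu hut ht)

end IsLowerRoot

end charQuad

lemma cos_half_sq (ξ : ℝ) : Real.cos (ξ / 2) ^ 2 = (1 + Real.cos ξ) / 2 := by
  rw [Real.cos_sq, mul_div_cancel₀ _ two_ne_zero]; ring

lemma sin_half_sq (ξ : ℝ) : Real.sin (ξ / 2) ^ 2 = (1 - Real.cos ξ) / 2 := by
  rw [Real.sin_sq, cos_half_sq]; ring

lemma det_Msym (ξ : ℝ) : (Msym ξ).det = 1 / 12 := by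
  have hsc : (Real.sin ξ : ℂ) ^ 2 + (Real.cos ξ : ℂ) ^ 2 = 1 := by
    exact_mod_cast Real.sin_sq_add_cos_sq ξ
  rw [Msym, Matrix.det_fin_two_of]
  push_cast [-Complex.ofReal_cos, -Complex.ofReal_sin]
  linear_combination ((Real.sin ξ : ℂ) ^ 2 / 36) * Complex.I_sq - hsc / 36

lemma det_Rsym_sub_smul_Msym (s ξ x : ℝ) :
    (Rsym s ξ - (x : ℂ) • Msym ξ).det = charQuad s (Real.cos ξ) x := by
  have hsc : (Real.sin ξ : ℂ) ^ 2 + (Real.cos ξ : ℂ) ^ 2 = 1 := by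
    exact_mod_cast Real.sin_sq_add_cos_sq ξ
  rw [Rsym, Msym, cos_half_sq, sin_half_sq, charQuad, charB, Matrix.det_fin_two]
  simp only [Matrix.sub_apply, Matrix.smul_apply, Matrix.of_apply, Matrix.cons_val',
    Matrix.cons_val_zero, Matrix.cons_val_one, Matrix.empty_val', Matrix.cons_val_fin_one,
    smul_eq_mul]
  push_cast [-Complex.ofReal_cos, -Complex.ofReal_sin]
  linear_combination (-(x : ℂ) ^ 2 / 36) * hsc
    + ((x : ℂ) ^ 2 * (Real.sin ξ : ℂ) ^ 2 / 36) * Complex.I_sq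

lemma isEigOf_inv_mul_iff {M R : Matrix (Fin 2) (Fin 2) ℂ} (hM : IsUnit M.det) (Λ : ℂ) :
    IsEigOf (M⁻¹ * R) Λ ↔ (R - Λ • M).det = 0 := by
  have hfactor : M⁻¹ * R - Λ • 1 = M⁻¹ * (R - Λ • M) := by
    rw [Matrix.mul_sub, Matrix.mul_smul, Matrix.nonsing_inv_mul _ hM]
  have hinv : M⁻¹.det ≠ 0 := (M.isUnit_nonsing_inv_det hM).ne_zero
  calc IsEigOf (M⁻¹ * R) Λ ↔ ∃ v ≠ 0, (M⁻¹ * R - Λ • 1) *ᵥ v = 0 := by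
        simp only [IsEigOf, Matrix.sub_mulVec, Matrix.smul_mulVec, Matrix.one_mulVec, sub_eq_zero]
    _ ↔ (M⁻¹ * R - Λ • 1).det = 0 := Matrix.exists_mulVec_eq_zero_iff
    _ ↔ (R - Λ • M).det = 0 := by rw [hfactor, Matrix.det_mul, mul_eq_zero, or_iff_right hinv]

lemma isEigOf_Ssym_iff (s ξ x : ℝ) : IsEigOf (Ssym s ξ) x ↔ charQuad s (Real.cos ξ) x = 0 := by
  rw [Ssym, isEigOf_inv_mul_iff (by rw [det_Msym]; norm_num), det_Rsym_sub_smul_Msym,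
    Complex.ofReal_eq_zero]

lemma isLowerRoot_of_isLeast {s ξ x : ℝ} (h : IsLeast {μ : ℝ | IsEigOf (Ssym s ξ) μ} x) :
    IsLowerRoot s (Real.cos ξ) x := by
  have hx := (isEigOf_Ssym_iff s ξ x).1 h.1
  have hreflect := h.2 ((isEigOf_Ssym_iff s ξ _).2 (charQuad_reflect.trans hx))
  exact ⟨hx, by linarith⟩

theorem Ssym_physical_eigenvalue_monotone (s : ℝ) (hs : 1 < s)
    (ξ₁ ξ₂ : ℝ) (hξ₁ : ξ₁ ∈ Set.Icc 0 Real.pi) (hξ₂ : ξ₂ ∈ Set.Icc 0 Real.pi)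
    (hle : ξ₁ ≤ ξ₂) (Λ₁ Λ₂ : ℝ)
    (h₁ : IsEigOf (Ssym s ξ₁) ((Λ₁ : ℝ) : ℂ) ∧
      ∀ μ : ℝ, IsEigOf (Ssym s ξ₁) (μ : ℂ) → Λ₁ ≤ μ)
    (h₂ : IsEigOf (Ssym s ξ₂) ((Λ₂ : ℝ) : ℂ) ∧
      ∀ μ : ℝ, IsEigOf (Ssym s ξ₂) (μ : ℂ) → Λ₂ ≤ μ) :
    Λ₁ ≤ Λ₂ := by
  have hcos : Real.cos ξ₂ ≤ Real.cos ξ₁ := Real.cos_le_cos_of_nonneg_of_le_pi hξ₁.1 hξ₂.2 hle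
  exact (isLowerRoot_of_isLeast h₁).le_of_le hs (Real.neg_one_le_cos ξ₂) hcos
    (Real.cos_le_one ξ₁) ((isEigOf_Ssym_iff s ξ₂ Λ₂).1 h₂.1)
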